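/- Under the accelerated gradient method with step size 1/L on a convex differentiable function f with L-Lipschitz gradient, if the set of minimizers X̄ is nonempty with optimal value f̄, then f(x_k) - f̄ ≤ 2L·dist(x₀, X̄)²/(k+1)² for all k ≥ 1. -/

import Mathlib

/-!
Fix any point `z` and write the method in three-sequence form `y k = (1 - θ k) • x k + θ k • v k`.
Convexity and the descent lemma give, for one gradient step, the three-point inequality
`f (w - L⁻¹ ∇f w) ≤ f z + L/2 (‖w - z‖² - ‖w - L⁻¹ ∇f w - z‖²)`; applied with `w = y k` and the
convex combination `(1 - θ k) • x k + θ k • z`, it shows that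
`(f (x (k + 1)) - f z + L/2 θ k² ‖v (k + 1) - z‖²) / θ k²` is nonincreasing, because
`θ (k + 1)² = θ k² (1 - θ (k + 1))`. Hence `f (x (k + 1)) - f z ≤ L/2 θ k² ‖x 0 - z‖²`, and the same
recursion gives `θ (k + 1)⁻¹ ≥ θ k⁻¹ + 1/2`, i.e. `θ k ≤ 2 / (k + 2)`. Minimizing over `z ∈ X̄` yields
the claim.
-/

open scoped RealInnerProductSpace

open Set
open AffineMap (lineMap lineMap_apply_module' hasDerivAt_lineMap)

section Gradient

variable {E : Type*} [NormedAddCommGroup E] [InnerProductSpace ℝ E] [CompleteSpace E]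
  {f : E → ℝ} {f' : E → E} {g u v : E}

theorem HasGradientAt.hasDerivAt_comp_lineMap {t : ℝ}
    (h : HasGradientAt f g (lineMap u v t)) :
    HasDerivAt (fun s : ℝ ↦ f (lineMap u v s)) ⟪g, v - u⟫ t := by
  have := h.hasFDerivAt.comp_hasDerivAt t hasDerivAt_lineMap
  simp only [InnerProductSpace.toDual_apply_apply] at this
  exact this

theorem ConvexOn.add_inner_le_of_hasGradientAt (hf : ConvexOn ℝ univ f)
    (hg : HasGradientAt f g u) (v : E) : f u + ⟪g, v - u⟫ ≤ f v := by
  have hline : ConvexOn ℝ univ (fun s : ℝ ↦ f (lineMap u v s)) := hf.comp_affineMap _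
  have hderiv : HasDerivAt (fun s : ℝ ↦ f (lineMap u v s)) ⟪g, v - u⟫ 0 :=
    HasGradientAt.hasDerivAt_comp_lineMap (by simpa using hg)
  have := hline.le_slope_of_hasDerivAt (mem_univ 0) (mem_univ 1) zero_lt_one hderiv
  simp only [slope_def_field, AffineMap.lineMap_apply_one, AffineMap.lineMap_apply_zero, sub_zero,
    div_one] at this
  linarith

theorem le_add_inner_add_sq_of_lipschitz_gradient {L : ℝ}
    (hf' : ∀ x, HasGradientAt f (f' x) x) (hlip : ∀ x y, ‖f' x - f' y‖ ≤ L * ‖x - y‖)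
    (u v : E) : f v ≤ f u + ⟪f' u, v - u⟫ + L / 2 * ‖v - u‖ ^ 2 := by
  set ψ : ℝ → ℝ := fun t ↦ f (lineMap u v t) - (t * ⟪f' u, v - u⟫ + L / 2 * ‖v - u‖ ^ 2 * t ^ 2)
  have hψ (t : ℝ) : HasDerivAt ψ
      (⟪f' (lineMap u v t), v - u⟫ - (⟪f' u, v - u⟫ + L * ‖v - u‖ ^ 2 * t)) t := by
    refine (hf' _).hasDerivAt_comp_lineMap.sub <|
      (((hasDerivAt_id' t).mul_const _).add ((hasDerivAt_pow 2 t).const_mul _)).congr_deriv ?_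
    norm_num; ring
  have hanti : AntitoneOn ψ (Ici 0) := by
    refine antitoneOn_of_hasDerivWithinAt_nonpos (convex_Ici 0)
      (fun t _ ↦ (hψ t).continuousAt.continuousWithinAt)
      (fun t _ ↦ (hψ t).hasDerivWithinAt) fun t ht ↦ ?_
    rw [interior_Ici, mem_Ioi] at ht
    have hdist : ‖lineMap u v t - u‖ = t * ‖v - u‖ := by
      rw [lineMap_apply_module', add_sub_cancel_right, norm_smul, Real.norm_of_nonneg ht.le]
    have : ⟪f' (lineMap u v t) - f' u, v - u⟫ ≤ L * ‖v - u‖ ^ 2 * t := calc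
      _ ≤ ‖f' (lineMap u v t) - f' u‖ * ‖v - u‖ := real_inner_le_norm _ _
      _ ≤ L * ‖lineMap u v t - u‖ * ‖v - u‖ := by gcongr; exact hlip _ _
      _ = L * ‖v - u‖ ^ 2 * t := by rw [hdist]; ring
    rw [inner_sub_left] at this
    linarith
  have := hanti self_mem_Ici (mem_Ici.2 zero_le_one) zero_le_one
  simp only [ψ, AffineMap.lineMap_apply_one, AffineMap.lineMap_apply_zero, one_pow, mul_one,
    zero_mul, ne_eq, OfNat.ofNat_ne_zero, not_false_eq_true, zero_pow, mul_zero, add_zero,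
    sub_zero] at this
  linarith

theorem apply_sub_smul_gradient_le {L : ℝ} (hL : 0 < L) (hconv : ConvexOn ℝ univ f)
    (hf' : ∀ x, HasGradientAt f (f' x) x) (hlip : ∀ x y, ‖f' x - f' y‖ ≤ L * ‖x - y‖)
    (w z : E) :
    f (w - (1 / L) • f' w) ≤ f z + L / 2 * (‖w - z‖ ^ 2 - ‖w - (1 / L) • f' w - z‖ ^ 2) := by
  have hdescent : f (w - (1 / L) • f' w) ≤ f w - 1 / (2 * L) * ‖f' w‖ ^ 2 := by
    have := le_add_inner_add_sq_of_lipschitz_gradient hf' hlip w (w - (1 / L) • f' w)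
    rw [sub_sub_cancel_left, inner_neg_right, real_inner_smul_right, norm_neg, norm_smul,
      real_inner_self_eq_norm_sq, Real.norm_of_nonneg (by positivity)] at this
    convert this using 1
    field_simp
    ring
  have hsupport := hconv.add_inner_le_of_hasGradientAt (hf' w) z
  rw [← neg_sub, inner_neg_right] at hsupport
  have hexpand : L / 2 * (‖w - z‖ ^ 2 - ‖w - (1 / L) • f' w - z‖ ^ 2)
      = ⟪f' w, w - z⟫ - 1 / (2 * L) * ‖f' w‖ ^ 2 := by
    rw [sub_right_comm, norm_sub_sq_real (w - z), real_inner_smul_right, norm_smul,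
      Real.norm_of_nonneg (by positivity), real_inner_comm]
    field_simp
    ring
  linarith

theorem inv_add_half_le_inv_of_sq_eq {s t : ℝ} (hs : 0 < s) (ht : 0 < t)
    (h : t ^ 2 = s ^ 2 * (1 - t)) : s⁻¹ + 1 / 2 ≤ t⁻¹ := by
  have hrec : t⁻¹ ^ 2 - t⁻¹ = s⁻¹ ^ 2 := by
    field_simp
    linear_combination -h
  have ha : 1 < t⁻¹ := by nlinarith [inv_pos.2 hs, inv_pos.2 ht]
  nlinarith [inv_pos.2 hs]

end Gradient

theorem le_mul_infDist_sq {α : Type*} [PseudoMetricSpace α] {x : α} {s : Set α} {a c : ℝ}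
    (hc : 0 < c) (hs : s.Nonempty) (h : ∀ y ∈ s, a ≤ c * dist x y ^ 2) :
    a ≤ c * Metric.infDist x s ^ 2 := by
  have : √(a / c) ≤ Metric.infDist x s := (Metric.le_infDist hs).2 fun y hy ↦
    (Real.sqrt_le_left dist_nonneg).2 ((div_le_iff₀' hc).2 (h y hy))
  exact (div_le_iff₀' hc).1 ((Real.sqrt_le_left Metric.infDist_nonneg).1 this)

namespace AcceleratedGradient

theorem weight_le {θ : ℕ → ℝ} (hθ0 : θ 0 = 1) (hθpos : ∀ k, 0 < θ (k + 1))
    (hθrec : ∀ k, θ (k + 1) ^ 2 = θ k ^ 2 * (1 - θ (k + 1))) (k : ℕ) :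
    θ k ≤ 2 / ((k : ℝ) + 2) := by
  have hpos : 0 < θ k := by cases k <;> simp [hθ0, hθpos]
  suffices ((k : ℝ) + 2) / 2 ≤ (θ k)⁻¹ by
    rw [← inv_div]; exact (le_inv_comm₀ hpos (by positivity)).2 this
  induction k with
  | zero => simp [hθ0]
  | succ k ih =>
    have hk : 0 < θ k := by cases k <;> simp [hθ0, hθpos]
    have := inv_add_half_le_inv_of_sq_eq hk (hθpos k) (hθrec k)
    push_cast
    linarith [ih hk]

variable {E : Type*} [NormedAddCommGroup E] [InnerProductSpace ℝ E] [CompleteSpace E]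
  {f : E → ℝ} {f' : E → E} {L : ℝ}

theorem step_energy_le (hL : 0 < L) (hconv : ConvexOn ℝ univ f)
    (hf' : ∀ x, HasGradientAt f (f' x) x) (hlip : ∀ x y, ‖f' x - f' y‖ ≤ L * ‖x - y‖)
    {t : ℝ} (ht : t ∈ Ioc 0 1) {x v x' : E} (z : E)
    (hx' : x' = (1 - t) • x + t • v - (1 / L) • f' ((1 - t) • x + t • v)) :
    f x' - f z + L / 2 * t ^ 2 * ‖x + t⁻¹ • (x' - x) - z‖ ^ 2
      ≤ (1 - t) * (f x - f z) + L / 2 * t ^ 2 * ‖v - z‖ ^ 2 := by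
  have hkey := apply_sub_smul_gradient_le hL hconv hf' hlip ((1 - t) • x + t • v)
    ((1 - t) • x + t • z)
  rw [← hx'] at hkey
  have hconvex : f ((1 - t) • x + t • z) ≤ (1 - t) * f x + t * f z :=
    hconv.2 (mem_univ _) (mem_univ _) (sub_nonneg.2 ht.2) ht.1.le (by ring)
  have hv : (1 - t) • x + t • v - ((1 - t) • x + t • z) = t • (v - z) := by module
  have hx'' : x' - ((1 - t) • x + t • z) = t • (x + t⁻¹ • (x' - x) - z) := by
    rw [smul_sub, smul_add, smul_smul, mul_inv_cancel₀ ht.1.ne', one_smul]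
    module
  rw [hv, hx'', norm_smul, norm_smul, Real.norm_of_nonneg ht.1.le, mul_pow, mul_pow] at hkey
  linear_combination hkey + hconvex

theorem energy_le (hL : 0 < L) (hconv : ConvexOn ℝ univ f)
    (hf' : ∀ x, HasGradientAt f (f' x) x) (hlip : ∀ x y, ‖f' x - f' y‖ ≤ L * ‖x - y‖)
    {x v : ℕ → E} {θ : ℕ → ℝ} (hθ0 : θ 0 = 1) (hθ : ∀ k, θ k ∈ Ioc 0 1)
    (hθrec : ∀ k, θ (k + 1) ^ 2 = θ k ^ 2 * (1 - θ (k + 1))) (hv0 : v 0 = x 0)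
    (hx : ∀ k, x (k + 1) = (1 - θ k) • x k + θ k • v k
      - (1 / L) • f' ((1 - θ k) • x k + θ k • v k))
    (hv : ∀ k, v (k + 1) = x k + (θ k)⁻¹ • (x (k + 1) - x k)) (z : E) (k : ℕ) :
    f (x (k + 1)) - f z + L / 2 * θ k ^ 2 * ‖v (k + 1) - z‖ ^ 2
      ≤ L / 2 * θ k ^ 2 * ‖x 0 - z‖ ^ 2 := by
  induction k with
  | zero =>
    have := step_energy_le hL hconv hf' hlip (hθ 0) z (hx 0)
    rw [← hv, hθ0, hv0] at this
    rw [hθ0]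
    linarith
  | succ k ih =>
    have hstep := step_energy_le hL hconv hf' hlip (hθ (k + 1)) z (hx (k + 1))
    rw [← hv, hθrec k] at hstep
    rw [hθrec k]
    have := mul_le_mul_of_nonneg_left ih (sub_nonneg.2 (hθ (k + 1)).2)
    linear_combination hstep + this

theorem sub_le (hL : 0 < L) (hconv : ConvexOn ℝ univ f)
    (hf' : ∀ x, HasGradientAt f (f' x) x) (hlip : ∀ x y, ‖f' x - f' y‖ ≤ L * ‖x - y‖)
    {x y : ℕ → E} {θ : ℕ → ℝ} (hy0 : y 0 = x 0) (hθ0 : θ 0 = 1)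
    (hx : ∀ k, x (k + 1) = y k - (1 / L) • f' (y k))
    (hθmem : ∀ k, θ (k + 1) ∈ Ioo (0 : ℝ) 1)
    (hθrec : ∀ k, θ (k + 1) ^ 2 = θ k ^ 2 * (1 - θ (k + 1)))
    (hyrec : ∀ k, y (k + 1) = x (k + 1) + (θ (k + 1) * (1 - θ k) / θ k) • (x (k + 1) - x k))
    (z : E) {k : ℕ} (hk : 1 ≤ k) :
    f (x k) - f z ≤ 2 * L * ‖x 0 - z‖ ^ 2 / (k + 1) ^ 2 := by
  obtain ⟨m, rfl⟩ : ∃ m, k = m + 1 := ⟨k - 1, by omega⟩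
  have hθ : ∀ k, θ k ∈ Ioc 0 1 := by
    rintro (_ | k)
    · simp [hθ0]
    · exact Ioo_subset_Ioc_self (hθmem k)
  set v : ℕ → E := fun k ↦ x k + (θ k)⁻¹ • (y k - x k)
  have hy (k : ℕ) : y k = (1 - θ k) • x k + θ k • v k := by
    simp only [v, smul_add, smul_smul, mul_inv_cancel₀ (hθ k).1.ne', one_smul]
    module
  have hv (k : ℕ) : v (k + 1) = x k + (θ k)⁻¹ • (x (k + 1) - x k) := by
    have hθk := (hθ k).1.ne'
    have hθk1 := (hθ (k + 1)).1.ne'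
    simp only [v, hyrec k, add_sub_cancel_left, smul_smul]
    match_scalars <;> field_simp <;> ring
  have henergy := energy_le hL hconv hf' hlip hθ0 hθ hθrec (by simp [v, hy0])
    (fun k ↦ hy k ▸ hx k) hv z m
  have hweight := weight_le hθ0 (fun k ↦ (hθmem k).1) hθrec m
  calc f (x (m + 1)) - f z ≤ L / 2 * θ m ^ 2 * ‖x 0 - z‖ ^ 2 := by
        nlinarith [sq_nonneg (θ m * ‖v (m + 1) - z‖)]
    _ ≤ L / 2 * (2 / ((m : ℝ) + 2)) ^ 2 * ‖x 0 - z‖ ^ 2 := by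
        gcongr
        exact (hθ m).1.le
    _ = 2 * L * ‖x 0 - z‖ ^ 2 / (↑(m + 1) + 1) ^ 2 := by
        push_cast
        field_simp
        ring

end AcceleratedGradient

theorem accelerated_gradient_rate
    {E : Type*} [NormedAddCommGroup E] [InnerProductSpace ℝ E] [CompleteSpace E]
    (f : E → ℝ) (f' : E → E) (L : ℝ) (hL : 0 < L)
    (hconv : ConvexOn ℝ Set.univ f)
    (hdiff : ∀ x : E, HasGradientAt f (f' x) x)
    (hlip : ∀ x y : E, ‖f' x - f' y‖ ≤ L * ‖x - y‖)
    (x y : ℕ → E) (θ : ℕ → ℝ)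
    (hy0 : y 0 = x 0) (hθ0 : θ 0 = 1)
    (hx : ∀ k, x (k + 1) = y k - (1 / L) • f' (y k))
    (hθmem : ∀ k, θ (k + 1) ∈ Set.Ioo (0 : ℝ) 1)
    (hθrec : ∀ k, θ (k + 1) ^ 2 = θ k ^ 2 * (1 - θ (k + 1)))
    (hyrec : ∀ k, y (k + 1)
      = x (k + 1) + (θ (k + 1) * (1 - θ k) / θ k) • (x (k + 1) - x k))
    (Xbar : Set E) (hXbar : Xbar = {u : E | ∀ v : E, f u ≤ f v})
    (hne : Xbar.Nonempty)
    (fbar : ℝ) (hfbar : fbar = ⨅ u : E, f u) :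
    ∀ k : ℕ, 1 ≤ k →
      f (x k) - fbar ≤ 2 * L * Metric.infDist (x 0) Xbar ^ 2 / (k + 1) ^ 2 := by
  intro k hk
  obtain ⟨z, hz⟩ := hne
  subst hXbar
  have hfbar_eq : fbar = f z :=
    hfbar ▸ ciInf_eq_of_forall_ge_of_forall_gt_exists_lt hz fun _ hw ↦ ⟨z, hw⟩
  rw [mul_div_right_comm]
  refine le_mul_infDist_sq (by positivity) ⟨z, hz⟩ fun u hu ↦ ?_
  rw [dist_eq_norm, ← mul_div_right_comm, hfbar_eq]
  linarith [AcceleratedGradient.sub_le hL hconv hdiff hlip hy0 hθ0 hx hθmem hθrec hyrec u hk,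
    hu z]
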